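/- arXiv:1205.2726 — 2 statements merged into one kernel-verified Lean document; each statement's English description precedes it below -/
import Mathlib

section
/- The Laplace mechanism is ε-differentially private: for a function f : 𝒟 → ℝ with global sensitivity Δ(f), the mechanism M(D) = f(D) + Lap(Δ(f)/ε), where Lap(b) has density (1/2b)·exp(−|x|/b), satisfies ε-differential privacy. -/
/-- The Laplace mechanism is `ε`-differentially private: for `f : 𝒟 → ℝ` with global
sensitivity at most `Δ`, the output density of `M(D) = f(D) + Lap(Δ/ε)`, namely
`x ↦ (ε/(2Δ)) exp(−ε|x − f(D)|/Δ)`, changes by at most a factor `e^ε` between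
neighboring databases. -/
theorem laplace_mechanism_dp {𝒟 : Type*} (Neighbor : 𝒟 → 𝒟 → Prop)
    (f : 𝒟 → ℝ) (Δ ε : ℝ) (hΔ : 0 < Δ) (hε : 0 < ε)
    (hsens : ∀ D₁ D₂, Neighbor D₁ D₂ → |f D₁ - f D₂| ≤ Δ) :
    ∀ D₁ D₂, Neighbor D₁ D₂ → ∀ x : ℝ,
      (ε / (2 * Δ)) * Real.exp (-(ε * |x - f D₁|) / Δ) ≤
        Real.exp ε * ((ε / (2 * Δ)) * Real.exp (-(ε * |x - f D₂|) / Δ)) := by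
  intro D₁ D₂ hN x
  have hc : (0:ℝ) ≤ ε / (2 * Δ) := by positivity
  rw [mul_comm (Real.exp ε), mul_assoc, ← Real.exp_add]
  apply mul_le_mul_of_nonneg_left _ hc
  apply Real.exp_le_exp.mpr
  have h1 : |x - f D₂| - |x - f D₁| ≤ Δ := by
    have := abs_sub_abs_le_abs_sub (x - f D₂) (x - f D₁)
    have h2 := hsens D₁ D₂ hN
    calc |x - f D₂| - |x - f D₁| ≤ |(x - f D₂) - (x - f D₁)| := this
      _ = |f D₁ - f D₂| := by rw [show x - f D₂ - (x - f D₁) = f D₁ - f D₂ by ring]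
      _ ≤ Δ := h2
  have hΔ' := hΔ.le
  rw [div_add' _ _ _ hΔ.ne', div_le_div_iff₀ hΔ hΔ]
  nlinarith [abs_nonneg (x - f D₁), abs_nonneg (x - f D₂), mul_le_mul_of_nonneg_left h1 hε.le]
end

section
/- Sampling amplification: if M provides ε-differential privacy and 0 < p < 1, then the mechanism that includes each element of the input database independently into a sample S with probability p and outputs M(S) is 2pe^ε-differentially private, i.e., P(output ∈ R on D₁) ≤ e^{2pe^ε} P(output ∈ R on D₂) for neighboring D₁, D₂. -/
/-!
Splitting the samples of `l₁ ++ u :: l₂` according to whether they keep `u` writes the sampled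
mechanism on the larger database as the mixture `(1 - p) A + p B`, where `A` is the sampled
mechanism on `l₁ ++ l₂` and `B` is the same average with `u` put back into every sample.
Applying ε-dp sample by sample gives `B ≤ e^ε A` and `A ≤ e^ε B`, and both directions then
reduce to `1 + x ≤ e^x` with `x = 2 p e^ε`.
-/

open Real

noncomputable def subsampleMean {α : Type*} (p : ℝ) (D : List α) (f : List α → ℝ) : ℝ :=
  (D.sublists.map fun S => p ^ S.length * (1 - p) ^ (D.length - S.length) * f S).sum

namespace List

variable {α : Type*}

theorem sum_map_flatMap {β M : Type*} [AddMonoid M] (l : List α) (s : α → List β) (g : β → M) :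
    ((l.flatMap s).map g).sum = (l.map fun a => ((s a).map g).sum).sum := by
  simp [flatMap_def, sum_flatten, Function.comp_def]

end List

section subsampleMean

open List

variable {α : Type*} {p c : ℝ} {D : List α} {f g : List α → ℝ}

theorem subsampleMean_cons (p : ℝ) (u : α) (l : List α) (f : List α → ℝ) :
    subsampleMean p (u :: l) f =
      (1 - p) * subsampleMean p l f + p * subsampleMean p l (fun S => f (u :: S)) := by
  rw [subsampleMean, sublists_cons, bind_eq_flatMap, sum_map_flatMap, subsampleMean,
    subsampleMean, ← sum_map_mul_left, ← sum_map_mul_left, ← sum_map_add]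
  refine congrArg sum (map_congr_left fun S hS => ?_)
  have hS : S.length ≤ l.length := (mem_sublists.1 hS).length_le
  obtain ⟨k, hk⟩ := Nat.exists_eq_add_of_le hS
  simp only [map_cons, map_nil, sum_cons, sum_nil, length_cons, hk]
  rw [show S.length + k + 1 - S.length = k + 1 by omega,
    show S.length + k + 1 - (S.length + 1) = k by omega, Nat.add_sub_cancel_left]
  ring

theorem subsampleMean_append (p : ℝ) (l₁ l₂ : List α) (f : List α → ℝ) :
    subsampleMean p (l₁ ++ l₂) f =
      subsampleMean p l₂ fun b => subsampleMean p l₁ fun a => f (a ++ b) := by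
  rw [subsampleMean, sublists_append, bind_eq_flatMap, sum_map_flatMap, subsampleMean]
  refine congrArg sum (map_congr_left fun b hb => ?_)
  rw [subsampleMean, ← sum_map_mul_left, map_map]
  refine congrArg sum (map_congr_left fun a ha => ?_)
  have hb : b.length ≤ l₂.length := (mem_sublists.1 hb).length_le
  have ha : a.length ≤ l₁.length := (mem_sublists.1 ha).length_le
  simp only [Function.comp_apply, length_append]
  rw [show l₁.length + l₂.length - (a.length + b.length) =
    (l₂.length - b.length) + (l₁.length - a.length) by omega]
  ring

theorem sampleWeight_nonneg (hp₀ : 0 ≤ p) (hp₁ : p ≤ 1) (k m : ℕ) : 0 ≤ p ^ k * (1 - p) ^ m :=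
  mul_nonneg (pow_nonneg hp₀ k) (pow_nonneg (sub_nonneg.2 hp₁) m)

theorem subsampleMean_le_const_mul (hp₀ : 0 ≤ p) (hp₁ : p ≤ 1) (h : ∀ S, f S ≤ c * g S) :
    subsampleMean p D f ≤ c * subsampleMean p D g := by
  rw [subsampleMean, subsampleMean, ← sum_map_mul_left]
  refine sum_le_sum fun S _ => ?_
  rw [mul_left_comm]
  exact mul_le_mul_of_nonneg_left (h S) (sampleWeight_nonneg hp₀ hp₁ _ _)

theorem subsampleMean_nonneg (hp₀ : 0 ≤ p) (hp₁ : p ≤ 1) (h : ∀ S, 0 ≤ f S) :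
    0 ≤ subsampleMean p D f := by
  refine sum_nonneg fun x hx => ?_
  obtain ⟨S, -, rfl⟩ := mem_map.1 hx
  exact mul_nonneg (sampleWeight_nonneg hp₀ hp₁ _ _) (h S)

end subsampleMean

theorem mixture_le_exp_mul {p E a b : ℝ} (hp : 0 ≤ p) (hE : 0 ≤ E) (ha : 0 ≤ a)
    (hba : b ≤ E * a) : (1 - p) * a + p * b ≤ exp (2 * p * E) * a :=
  calc (1 - p) * a + p * b ≤ (1 + 2 * p * E) * a := by nlinarith [mul_nonneg hp ha]
    _ ≤ exp (2 * p * E) * a := by gcongr; linarith [add_one_le_exp (2 * p * E)]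

theorem le_exp_mul_mixture {p E a b : ℝ} (hp₀ : 0 ≤ p) (hp₁ : p ≤ 1) (hE : 1 ≤ E) (ha : 0 ≤ a)
    (hab : a ≤ E * b) : a ≤ exp (2 * p * E) * ((1 - p) * a + p * b) := by
  have hscalar : E ≤ exp (2 * p * E) * ((1 - p) * E + p) := by
    have hq : 0 ≤ (1 - p) * E + p := by nlinarith
    calc E ≤ (1 + 2 * p * E) * ((1 - p) * E + p) := by
          nlinarith [mul_nonneg (mul_nonneg hp₀ (sub_nonneg.2 hp₁)) (mul_nonneg (by linarith : 0 ≤ E)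
            (sub_nonneg.2 hE)), mul_nonneg hp₀ (by linarith : 0 ≤ E)]
      _ ≤ exp (2 * p * E) * ((1 - p) * E + p) := by
        gcongr; linarith [add_one_le_exp (2 * p * E)]
  refine le_of_mul_le_mul_left ?_ (by linarith : 0 < E)
  calc E * a ≤ exp (2 * p * E) * ((1 - p) * E + p) * a := by gcongr
    _ = exp (2 * p * E) * ((1 - p) * E * a + p * a) := by ring
    _ ≤ exp (2 * p * E) * ((1 - p) * E * a + p * (E * b)) := by gcongr
    _ = E * (exp (2 * p * E) * ((1 - p) * a + p * b)) := by ring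

theorem sampling_amplification_general {𝒰 ℛ : Type*}
    (P : List 𝒰 → Set ℛ → ℝ) (p ε : ℝ)
    (hp0 : 0 < p) (hp1 : p < 1) (hε : 0 < ε)
    (hnonneg : ∀ D R, 0 ≤ P D R)
    (hdp : ∀ (l₁ l₂ : List 𝒰) (u : 𝒰) (R : Set ℛ),
      P (l₁ ++ l₂) R ≤ Real.exp ε * P (l₁ ++ u :: l₂) R ∧
      P (l₁ ++ u :: l₂) R ≤ Real.exp ε * P (l₁ ++ l₂) R)
    (samp : List 𝒰 → Set ℛ → ℝ)
    (hsamp : ∀ D R, samp D R =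
      ((D.sublists).map
        (fun S => p ^ S.length * (1 - p) ^ (D.length - S.length) * P S R)).sum) :
    ∀ (l₁ l₂ : List 𝒰) (u : 𝒰) (R : Set ℛ),
      samp (l₁ ++ u :: l₂) R ≤ Real.exp (2 * p * Real.exp ε) * samp (l₁ ++ l₂) R ∧
      samp (l₁ ++ l₂) R ≤ Real.exp (2 * p * Real.exp ε) * samp (l₁ ++ u :: l₂) R := by
  intro l₁ l₂ u R
  have hp₀ := hp0.le
  have hp₁ := hp1.le
  have hsamp' (D : List 𝒰) : samp D R = subsampleMean p D (P · R) := hsamp D R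
  set A := subsampleMean p (l₁ ++ l₂) (P · R)
  set B := subsampleMean p l₂ fun b => subsampleMean p l₁ fun a => P (a ++ u :: b) R
  have hA_split : A = subsampleMean p l₂ fun b => subsampleMean p l₁ fun a => P (a ++ b) R :=
    subsampleMean_append p l₁ l₂ (P · R)
  have hsplit : samp (l₁ ++ u :: l₂) R = (1 - p) * A + p * B := by
    rw [hsamp', subsampleMean_append, subsampleMean_cons, ← hA_split]
  have hBA : B ≤ exp ε * A := by
    rw [hA_split]
    exact subsampleMean_le_const_mul hp₀ hp₁ fun b =>
      subsampleMean_le_const_mul hp₀ hp₁ fun a => (hdp a b u R).2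
  have hAB : A ≤ exp ε * B := by
    rw [hA_split]
    exact subsampleMean_le_const_mul hp₀ hp₁ fun b =>
      subsampleMean_le_const_mul hp₀ hp₁ fun a => (hdp a b u R).1
  have hA : 0 ≤ A := subsampleMean_nonneg hp₀ hp₁ fun S => hnonneg S R
  rw [hsplit, hsamp']
  exact ⟨mixture_le_exp_mul hp₀ (exp_pos ε).le hA hBA,
    le_exp_mul_mixture hp₀ hp₁ (one_le_exp hε.le) hA hAB⟩

/-- Sampling amplification: if `M` (here given by its output probabilities `P`) is
`ε`-dp on databases represented as lists, and the sampled mechanism includes each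
tuple independently with probability `p` and runs `M` on the sample, then the sampled
mechanism is `2 p e^ε`-differentially private. -/
theorem sampling_amplification {𝒰 ℛ : Type*}
    (P : List 𝒰 → Set ℛ → ℝ) (p ε : ℝ)
    (hp0 : 0 < p) (hp1 : p < 1) (hε : 0 < ε)
    (hnonneg : ∀ D R, 0 ≤ P D R)
    (hprob : ∀ D R, P D R ≤ 1)
    (hdp : ∀ (l₁ l₂ : List 𝒰) (u : 𝒰) (R : Set ℛ),
      P (l₁ ++ l₂) R ≤ Real.exp ε * P (l₁ ++ u :: l₂) R ∧
      P (l₁ ++ u :: l₂) R ≤ Real.exp ε * P (l₁ ++ l₂) R)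
    (samp : List 𝒰 → Set ℛ → ℝ)
    (hsamp : ∀ D R, samp D R =
      ((D.sublists).map
        (fun S => p ^ S.length * (1 - p) ^ (D.length - S.length) * P S R)).sum) :
    ∀ (l₁ l₂ : List 𝒰) (u : 𝒰) (R : Set ℛ),
      samp (l₁ ++ u :: l₂) R ≤ Real.exp (2 * p * Real.exp ε) * samp (l₁ ++ l₂) R ∧
      samp (l₁ ++ l₂) R ≤ Real.exp (2 * p * Real.exp ε) * samp (l₁ ++ u :: l₂) R :=
  sampling_amplification_general P p ε hp0 hp1 hε hnonneg hdp samp hsamp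
end
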